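/- Let N be a cotorsion left A-module and q an object of C. Then G_q(N) = Hom_k(C(-,q), N) is a cotorsion object of Mod(C,A). -/

import Mathlib

open CategoryTheory CategoryTheory.Limits Opposite

noncomputable section
namespace Paper

section Generic
variable {M : Type 1} [Category.{0} M] [Abelian M]

/-- `Ext^1(F, X) = 0`, expressed by the splitting of all short exact sequences
`0 → X → Y → F → 0`. -/
def Ext1Zero (F X : M) : Prop :=
  ∀ (Y : M) (i : X ⟶ Y) (p : Y ⟶ F) (w : i ≫ p = 0),
    (ShortComplex.mk i p w).ShortExact → ∃ r : Y ⟶ X, i ≫ r = 𝟙 X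

/-- flat object: a filtered colimit of projective objects -/
def IsFlatObj (X : M) : Prop :=
  ∃ (J : Type) (_ : SmallCategory J) (_ : IsFiltered J) (D : J ⥤ M) (c : Cocone D),
    (∀ j, Projective (D.obj j)) ∧ Nonempty (IsColimit c) ∧ Nonempty (c.pt ≅ X)

/-- cotorsion object: right `Ext¹`-orthogonal to all flat objects -/
def IsCotorsion (X : M) : Prop := ∀ F : M, IsFlatObj F → Ext1Zero F X

end Generic

variable (k : Type) [CommRing k] (A : Type) [Ring A] [Algebra k A]

instance (M : ModuleCat.{0} A) : Module k M := RestrictScalars.module k A M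
instance (M : ModuleCat.{0} A) : IsScalarTower k A M := RestrictScalars.isScalarTower k A M

instance modLinear : CategoryTheory.Linear k (ModuleCat.{0} A) where
  homModule _ _ := ModuleCat.Hom.instModule
  smul_comp := by
    intros
    ext
    simp only [ModuleCat.hom_comp, ModuleCat.hom_smul, LinearMap.comp_apply,
      LinearMap.smul_apply, LinearMap.map_smul_of_tower]

variable (C : Type) [SmallCategory C] [Preadditive C] [CategoryTheory.Linear k C]

/-- The predicate singling out the additive `k`-linear functors `C ⥤ Mod A`. -/
def LinPred (F : C ⥤ ModuleCat.{0} A) : Prop :=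
  F.Additive ∧ ∀ ⦃X Y : C⦄ (f : X ⟶ Y) (c : k), F.map (c • f) = c • F.map f

/-- `Mod(C,A)`: the category of additive `k`-linear functors `C ⥤ Mod A`. -/
abbrev ModCA := ObjectProperty.FullSubcategory (LinPred k A C)

/-- The evaluation functor `E_q : Mod(C,A) ⥤ Mod A`. -/
def evalQ (q : C) : ModCA k A C ⥤ ModuleCat.{0} A :=
  ObjectProperty.ι _ ⋙ (evaluation C (ModuleCat.{0} A)).obj q


instance (M : ModuleCat.{0} A) : SMulCommClass k A M :=
  ⟨fun c a m => by
    rw [← algebraMap_smul A c m, ← algebraMap_smul A c (a • m), smul_smul, smul_smul,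
      Algebra.commutes]⟩

theorem closedLim (J : Type) [SmallCategory J] :
    ∀ ⦃F : J ⥤ C ⥤ ModuleCat.{0} A⦄ ⦃c : Cone F⦄ (_ : IsLimit c),
      (∀ j, LinPred k A C (F.obj j)) → LinPred k A C c.pt := by
  intro F c hc hF
  constructor
  · constructor
    intro X Y f g
    apply (isLimitOfPreserves ((evaluation C (ModuleCat.{0} A)).obj Y) hc).hom_ext
    intro j
    haveI := (hF j).1
    have n := fun (h : X ⟶ Y) => (c.π.app j).naturality h
    simp only [Functor.const_obj_obj] at n
    simp only [Functor.mapCone_π_app, evaluation_obj_map]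
    rw [Preadditive.add_comp, n, n, n, Functor.map_add, Preadditive.comp_add]
  · intro X Y f a
    apply (isLimitOfPreserves ((evaluation C (ModuleCat.{0} A)).obj Y) hc).hom_ext
    intro j
    have n := fun (h : X ⟶ Y) => (c.π.app j).naturality h
    simp only [Functor.const_obj_obj] at n
    simp only [Functor.mapCone_π_app, evaluation_obj_map]
    rw [CategoryTheory.Linear.smul_comp, n, n, (hF j).2 f a, CategoryTheory.Linear.comp_smul]

theorem evalQ_preservesLimitsOfShape (q : C) (J : Type) [SmallCategory J] :
    PreservesLimitsOfShape J (evalQ k A C q) := by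
  haveI : ObjectProperty.IsClosedUnderLimitsOfShape (LinPred k A C) J :=
    ⟨fun _ ⟨p⟩ => closedLim k A C J p.isLimit p.prop_diag_obj⟩
  haveI : CreatesLimitsOfShape J (ObjectProperty.ι (LinPred k A C)) := inferInstance
  exact comp_preservesLimitsOfShape _ _

theorem evalQ_preservesFiniteLimits (q : C) : PreservesFiniteLimits (evalQ k A C q) :=
  ⟨fun J _ _ => evalQ_preservesLimitsOfShape k A C q J⟩

/-- The underlying functor of the concrete right adjoint `G_q(M) = Hom_k(C(-,q), M)`. -/
def GcObj (q : C) (M : ModuleCat.{0} A) : C ⥤ ModuleCat.{0} A where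
  obj p := ModuleCat.of A ((p ⟶ q) →ₗ[k] M)
  map {p p'} f := ModuleCat.ofHom
    { toFun := fun φ => φ.comp (CategoryTheory.Linear.leftComp k q f)
      map_add' := fun φ ψ => rfl
      map_smul' := fun a φ => rfl }
  map_id := fun p =>
    ModuleCat.hom_ext (LinearMap.ext fun (φ : (p ⟶ q) →ₗ[k] M) => LinearMap.ext fun g =>
      congrArg φ (Category.id_comp g))
  map_comp := fun {p p' p''} f g =>
    ModuleCat.hom_ext (LinearMap.ext fun (φ : (p ⟶ q) →ₗ[k] M) => LinearMap.ext fun h =>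
      (by show φ ((f ≫ g) ≫ h) = φ (f ≫ (g ≫ h)); rw [Category.assoc]))

theorem GcObj_linPred (q : C) (M : ModuleCat.{0} A) : LinPred k A C (GcObj k A C q M) := by
  constructor
  · constructor
    intro p p' f g
    refine ModuleCat.hom_ext (LinearMap.ext fun (φ : (p ⟶ q) →ₗ[k] ↑M) => LinearMap.ext fun h => ?_)
    show φ ((f + g) ≫ h) = φ (f ≫ h) + φ (g ≫ h)
    rw [Preadditive.add_comp, map_add]
  · intro p p' f c
    refine ModuleCat.hom_ext (LinearMap.ext fun (φ : (p ⟶ q) →ₗ[k] ↑M) => ?_)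
    show (φ.comp (CategoryTheory.Linear.leftComp k q (c • f))) =
      (c • (φ.comp (CategoryTheory.Linear.leftComp k q f)) : (p' ⟶ q) →ₗ[k] ↑M)
    refine LinearMap.ext fun h => ?_
    show φ ((c • f) ≫ h) = c • φ (f ≫ h)
    rw [CategoryTheory.Linear.smul_comp, map_smul]

/-- The concrete right adjoint `G_q` of `evalQ`. -/
def Gc (q : C) : ModuleCat.{0} A ⥤ ModCA k A C where
  obj M := ⟨GcObj k A C q M, GcObj_linPred k A C q M⟩
  map {M M'} u := ObjectProperty.homMk
    { app := fun p => ModuleCat.ofHom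
        { toFun := fun (φ : (p ⟶ q) →ₗ[k] ↑M) => (u.hom.restrictScalars k).comp φ
          map_add' := fun φ ψ => LinearMap.ext fun g => map_add u.hom _ _
          map_smul' := fun a φ => LinearMap.ext fun g => map_smul u.hom a _ }
      naturality := fun p p' f =>
        ModuleCat.hom_ext (LinearMap.ext fun φ => LinearMap.ext fun g => rfl) }
  map_id := fun M => rfl
  map_comp := fun u v => rfl

/-- Evaluation at the identity, as an `A`-linear map. -/
def evalIdHom (q : C) (M : ModuleCat.{0} A) : (GcObj k A C q M).obj q ⟶ M := ModuleCat.ofHom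
  { toFun := fun (φ : (q ⟶ q) →ₗ[k] ↑M) => φ (𝟙 q)
    map_add' := fun φ ψ => rfl
    map_smul' := fun a φ => rfl }

/-- The concrete adjunction `evalQ ⊣ Gc`. -/
def adjC (q : C) : evalQ k A C q ⊣ Gc k A C q :=
  Adjunction.mkOfHomEquiv
  { homEquiv := fun X M =>
      { toFun := fun g => ObjectProperty.homMk
          { app := fun p => ModuleCat.ofHom
              { toFun := fun x =>
                  { toFun := fun f => g ((X.obj.map f) x)
                    map_add' := fun f f' => by
                      haveI := X.property.1
                      show g (X.obj.map (f + f') x) = g (X.obj.map f x) + g (X.obj.map f' x)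
                      rw [Functor.map_add]
                      exact map_add g.hom _ _
                    map_smul' := fun c f => by
                      show g (X.obj.map (c • f) x) = c • g (X.obj.map f x)
                      rw [X.property.2 f c]
                      exact LinearMap.map_smul_of_tower g.hom c _ }
                map_add' := fun x x' => LinearMap.ext fun f => by
                  show g (X.obj.map f (x + x')) = g (X.obj.map f x) + g (X.obj.map f x')
                  exact (congrArg g.hom (map_add (X.obj.map f).hom x x')).trans (map_add g.hom _ _)
                map_smul' := fun a x => LinearMap.ext fun f => by
                  show g (X.obj.map f (a • x)) = a • g (X.obj.map f x)
                  exact (congrArg g.hom (map_smul (X.obj.map f).hom a x)).trans (map_smul g.hom a _) }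
            naturality := fun p p' h => ModuleCat.hom_ext (LinearMap.ext fun x => LinearMap.ext fun f' => by
              show g (X.obj.map f' (X.obj.map h x)) = g (X.obj.map (h ≫ f') x)
              rw [X.obj.map_comp]
              rfl) }
        invFun := fun η => η.hom.app q ≫ evalIdHom k A C q M
        left_inv := fun g => ModuleCat.hom_ext (LinearMap.ext fun x => by
          show g (X.obj.map (𝟙 q) x) = g x
          rw [X.obj.map_id]
          rfl)
        right_inv := fun η => ObjectProperty.hom_ext _ (NatTrans.ext (funext fun p => ModuleCat.hom_ext (LinearMap.ext fun x =>
          LinearMap.ext fun f => by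
            have hψ : ∀ ψ : (p ⟶ q) →ₗ[k] ↑M, ψ (f ≫ 𝟙 q) = ψ f := fun ψ => by
              rw [Category.comp_id]
            exact (LinearMap.congr_fun (LinearMap.congr_fun (congrArg ModuleCat.Hom.hom (η.hom.naturality f)) x) (𝟙 q)).trans
              (hψ (η.hom.app p x))))) }
    homEquiv_naturality_left_symm := fun f g => rfl
    homEquiv_naturality_right := fun g u => ObjectProperty.hom_ext _ (NatTrans.ext (funext fun p =>
      ModuleCat.hom_ext (LinearMap.ext fun x => LinearMap.ext fun f => rfl))) }

theorem Gc_preservesEpimorphisms (hproj : ∀ p q : C, Module.Projective k (p ⟶ q)) (q : C) :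
    (Gc k A C q).PreservesEpimorphisms := by
  constructor
  intro M M' u hu
  have hsurj : Function.Surjective u := (ModuleCat.epi_iff_surjective u).mp hu
  haveI : ∀ p : C, Epi (((ObjectProperty.ι (LinPred k A C)).map
      ((Gc k A C q).map u)).app p) := by
    intro p
    rw [ModuleCat.epi_iff_surjective]
    intro ψ
    haveI := hproj p q
    obtain ⟨h, hh⟩ := Module.projective_lifting_property (u.hom.restrictScalars k)
      (ψ : (p ⟶ q) →ₗ[k] ↑M') (fun y => hsurj y)
    exact ⟨h, hh⟩
  have hepi : Epi ((ObjectProperty.ι (LinPred k A C)).map ((Gc k A C q).map u)) :=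
    NatTrans.epi_of_epi_app _
  haveI : (ObjectProperty.ι (LinPred k A C)).ReflectsEpimorphisms :=
    CategoryTheory.Functor.reflectsEpimorphisms_of_faithful _
  exact (ObjectProperty.ι (LinPred k A C)).epi_of_epi_map hepi

/-!
STATEMENT 2 (Corollary `cot`): if `N` is a cotorsion left `A`-module and `q ∈ C`, then
`G_q(N)` is a cotorsion object of `Mod(C,A)`.  Here `G_q` is the right adjoint of the
evaluation functor `E_q`.
-/
theorem statement2
    (hproj : ∀ p q : C, Module.Projective k (p ⟶ q))
    [Abelian (ModCA k A C)]
    (q : C) (Gq : ModuleCat.{0} A ⥤ ModCA k A C) (adjG : evalQ k A C q ⊣ Gq)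
    (N : ModuleCat.{0} A) (hN : IsCotorsion N) :
    IsCotorsion (Gq.obj N) := by
  intro F hF Y i pp w hS
  letI ab : Abelian (ModCA k A C) := inferInstance
  letI hzm : HasZeroMorphisms (ModCA k A C) :=
    @Preadditive.preadditiveHasZeroMorphisms _ _ ab.toPreadditive
  letI : PreservesFiniteLimits (evalQ k A C q) := evalQ_preservesFiniteLimits k A C q
  letI : PreservesColimitsOfSize.{0,0} (evalQ k A C q) := adjG.leftAdjoint_preservesColimits
  haveI : (evalQ k A C q).IsLeftAdjoint := ⟨Gq, ⟨adjG⟩⟩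
  haveI : (Gc k A C q).PreservesEpimorphisms := Gc_preservesEpimorphisms k A C hproj q
  haveI : Gq.PreservesEpimorphisms := by
    constructor
    intro M M' u hu
    have e : Gq ≅ Gc k A C q := adjG.rightAdjointUniq (adjC k A C q)
    have heq : Gq.map u = e.hom.app M ≫ (Gc k A C q).map u ≫ e.inv.app M' := by
      rw [← Category.assoc, ← e.hom.naturality u]
      simp
    rw [heq]
    infer_instance
  -- the evaluated short exact sequence
  have hS' := hS.map_of_exact (evalQ k A C q)
  -- flatness of the evaluated flat object
  obtain ⟨J, hJ1, hJ2, D, c, hDproj, ⟨hcolim⟩, ⟨hiso⟩⟩ := hF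
  letI := hJ1; letI := hJ2
  have hflat' : IsFlatObj ((evalQ k A C q).obj F) :=
    ⟨J, hJ1, hJ2, D ⋙ evalQ k A C q, (evalQ k A C q).mapCocone c,
      fun j => adjG.map_projective (D.obj j) (hDproj j),
      ⟨isColimitOfPreserves (evalQ k A C q) hcolim⟩, ⟨(evalQ k A C q).mapIso hiso⟩⟩
  -- notation for the evaluated data
  set E := evalQ k A C q with hE
  let i' : E.obj (Gq.obj N) ⟶ E.obj Y := E.map i
  let p' : E.obj Y ⟶ E.obj F := E.map pp
  let ε : E.obj (Gq.obj N) ⟶ N := adjG.counit.app N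
  have hi'inj : Function.Injective i' :=
    (ModuleCat.mono_iff_injective (((ShortComplex.mk i pp w).map E).f)).mp hS'.mono_f
  have hp'surj : Function.Surjective p' :=
    (ModuleCat.epi_iff_surjective (((ShortComplex.mk i pp w).map E).g)).mp hS'.epi_g
  have hexact : ∀ y : ↑(E.obj Y), p' y = 0 → ∃ x, i' x = y :=
    (ShortComplex.moduleCat_exact_iff _).mp hS'.exact
  have hw' : ∀ x, p' (i' x) = 0 := fun x =>
    ShortComplex.moduleCat_zero_apply ((ShortComplex.mk i pp w).map E) x
  -- pushout of the evaluated sequence along the counit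
  let φ : ↑(E.obj (Gq.obj N)) →ₗ[A] ↑N × ↑(E.obj Y) := LinearMap.prod ε.hom (-i'.hom)
  let Q := LinearMap.range φ
  let P : ModuleCat.{0} A := ModuleCat.of A ((↑N × ↑(E.obj Y)) ⧸ Q)
  let iP : N ⟶ P := ModuleCat.ofHom (Q.mkQ.comp (LinearMap.inl A ↑N ↑(E.obj Y)))
  have hle : Q ≤ LinearMap.ker (p'.hom.comp (LinearMap.snd A ↑N ↑(E.obj Y))) := by
    rintro _ ⟨x, rfl⟩
    rw [LinearMap.mem_ker]
    show p' (-(i' x)) = 0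
    rw [map_neg, hw', neg_zero]
  let pP : P ⟶ E.obj F := ModuleCat.ofHom (Q.liftQ (p'.hom.comp (LinearMap.snd A ↑N ↑(E.obj Y))) hle)
  have wP : iP ≫ pP = 0 := ModuleCat.hom_ext (LinearMap.ext fun n => by
    show p' 0 = 0
    exact map_zero p'.hom)
  have hSE : (ShortComplex.mk iP pP wP).ShortExact := by
    have hmono : Mono iP := (ModuleCat.mono_iff_injective iP).mpr ?_
    rotate_left
    · -- injectivity of iP
      refine (injective_iff_map_eq_zero iP.hom).mpr ?_
      intro n hn
      have hmem : ((n, 0) : ↑N × ↑(E.obj Y)) ∈ Q := (Submodule.Quotient.mk_eq_zero Q).mp hn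
      obtain ⟨x, hx⟩ := hmem
      have h2 : -(i' x) = 0 := congrArg Prod.snd hx
      have hx0 : x = 0 := hi'inj (by rw [map_zero]; exact neg_eq_zero.mp h2)
      have h1 : ε x = n := congrArg Prod.fst hx
      rw [← h1, hx0, map_zero]
    have hepi : Epi pP := (ModuleCat.epi_iff_surjective pP).mpr ?_
    rotate_left
    · -- surjectivity of pP
      intro z
      obtain ⟨y, hy⟩ := hp'surj z
      exact ⟨Submodule.Quotient.mk (0, y), hy⟩
    haveI := hmono
    haveI := hepi
    refine ⟨(ShortComplex.moduleCat_exact_iff _).mpr ?_⟩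
    · -- exactness
      intro z hz
      obtain ⟨⟨n, y⟩, rfl⟩ := Submodule.Quotient.mk_surjective Q z
      have hy : p' y = 0 := hz
      obtain ⟨x, hx⟩ := hexact y hy
      refine ⟨n + ε x, ?_⟩
      show Submodule.Quotient.mk (n + ε x, 0) = Submodule.Quotient.mk (n, y)
      rw [Submodule.Quotient.eq]
      refine ⟨x, ?_⟩
      show (ε x, -(i' x)) = (n + ε x, 0) - (n, y)
      rw [Prod.mk_sub_mk, hx]
      simp
  obtain ⟨s, hs⟩ := hN (E.obj F) hflat' P iP pP wP hSE
  let r' : E.obj Y ⟶ N := ModuleCat.ofHom (s.hom.comp (Q.mkQ.comp (LinearMap.inr A ↑N ↑(E.obj Y))))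
  have h1 : E.map i ≫ r' = adjG.counit.app N := ModuleCat.hom_ext (LinearMap.ext fun x => by
    have e1 : (Submodule.Quotient.mk (p := Q) (0, i' x)) = Submodule.Quotient.mk (ε x, 0) := by
      rw [Submodule.Quotient.eq]
      refine ⟨-x, by
        simp only [φ, map_neg, LinearMap.prod_apply, Pi.prod, Prod.mk_sub_mk, Prod.neg_mk,
          LinearMap.neg_apply, neg_neg, zero_sub, sub_zero, Prod.mk.injEq]
        show (-(ε x), -(-(i' x))) = (-(ε x), i' x); rw [neg_neg]⟩
    show s (Submodule.Quotient.mk (0, i' x)) = ε x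
    rw [e1]
    exact LinearMap.congr_fun (congrArg ModuleCat.Hom.hom hs) (ε x))
  refine ⟨(adjG.homEquiv Y N) r', ?_⟩
  rw [← adjG.homEquiv_naturality_left i r', h1, Adjunction.homEquiv_unit,
    Adjunction.right_triangle_components]

end Paper
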